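/- (Discrete nabla fractional Sobolev inequality.) Let μ > 0 be non-integer with m = ⌈μ⌉, let p ∈ ℤ₊ with μ > p, and let a ∈ ℤ₊. Let b ∈ ℕ with a + m < b, and let f : [a−m+1, ..., b] → ℝ with ∇^k f(a) = 0 for k = p, ..., m−1. Let γ, δ > 1 with 1/γ + 1/δ = 1, and let r ≥ 1. Then ( Σ_{j=a+m}^{b} |∇^p f(j)|^r )^{1/r} ≤ (1/Γ(μ−p)) · [ Σ_{j=a+m}^{b} ( Σ_{τ=a+1}^{j} ( (j−τ+1)^{↑(μ−p−1)} )^γ )^{r/γ} ]^{1/r} · ( Σ_{τ=a+1}^{b} |∇_{(a+1)*}^{μ} f(τ)|^δ )^{1/δ}. -/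

import Mathlib

open Finset

/-- Backward (nabla) difference: `∇f(t) = f(t) - f(t-1)`. -/
def nabla (f : ℤ → ℝ) : ℤ → ℝ := fun t => f t - f (t - 1)

/-- Rising factorial `t^{↑α} = Γ(t+α)/Γ(t)`. -/
noncomputable def risingFac (t α : ℝ) : ℝ := Real.Gamma (t + α) / Real.Gamma t

/-- The `ν`-th order nabla fractional sum `∇_a^{-ν} f (t) = Σ_{s=a}^{t} (t-s+1)^{↑(ν-1)}/Γ(ν) · f(s)`. -/
noncomputable def fracSum (ν : ℝ) (a : ℤ) (f : ℤ → ℝ) : ℤ → ℝ := fun t =>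
  ∑ s ∈ Finset.Icc a t, risingFac ((t - s + 1 : ℤ) : ℝ) (ν - 1) / Real.Gamma ν * f s

/-- Caputo-like nabla fractional difference `∇_{a*}^{μ} f = ∇_a^{-(m-μ)} (∇^m f)`, `m = ⌈μ⌉`. -/
noncomputable def caputoNabla (μ : ℝ) (a : ℤ) (f : ℤ → ℝ) : ℤ → ℝ :=
  fracSum ((⌈μ⌉₊ : ℝ) - μ) a (nabla^[⌈μ⌉₊] f)

/-! The Caputo difference is a fractional sum of `∇^m f`, and nabla fractional sums compose
additively in the order: for `ν > 0` their kernel `(n+1)^{↑(ν-1)}/Γ(ν) = Γ(n+ν)/(n! Γ(ν))` is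
the multichoose coefficient `Ring.multichoose ν n`, and these satisfy the Chu–Vandermonde
identity. Hence the fractional sum of order `μ - p` of the Caputo difference is
`∇^{-(m-p)} ∇^{m-p} (∇^p f)`, which is `∇^p f` itself because the differences of orders
`p, …, m-1` vanish at `a` (the fractional sum of integer order `n` is the `n`-fold summation,
inverse to `∇^n` under these initial conditions). Hölder's inequality applied to this
representation bounds `|∇^p f j|` pointwise, and summing `r`-th powers gives the inequality. -/

namespace Ring

/-- `multichoose r k = (-1)^k choose (-r) k` reduces this to the Chu–Vandermonde identity. -/
theorem multichoose_add {R : Type*} [CommRing R] [BinomialRing R] (r s : R) (k : ℕ) :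
    multichoose (r + s) k =
      ∑ ij ∈ antidiagonal k, multichoose r ij.1 * multichoose s ij.2 := by
  refine MulAction.injective (Int.negOnePow k) ?_
  simp only [smul_sum]
  rw [← choose_neg', neg_add, add_choose_eq k (Commute.all _ _)]
  refine sum_congr rfl fun ij hij => ?_
  rw [choose_neg', choose_neg', smul_mul_smul_comm, ← Int.negOnePow_add, ← Nat.cast_add,
    mem_antidiagonal.1 hij]

end Ring

theorem Real.Gamma_add_nat_eq_ascPochhammer_mul {ν : ℝ} (hν : 0 < ν) (n : ℕ) :
    Real.Gamma (ν + n) = (ascPochhammer ℝ n).eval ν * Real.Gamma ν := by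
  induction n with
  | zero => simp
  | succ n ih =>
    rw [Nat.cast_succ, ← add_assoc, Real.Gamma_add_one (by positivity), ih,
      ascPochhammer_succ_eval]
    ring

theorem risingFac_natCast_add_one_div_Gamma_eq_multichoose {ν : ℝ} (hν : 0 < ν) (n : ℕ) :
    risingFac ((n : ℝ) + 1) (ν - 1) / Real.Gamma ν = Ring.multichoose ν n := by
  have hfac := Ring.factorial_nsmul_multichoose_eq_ascPochhammer ν n
  rw [Polynomial.ascPochhammer_smeval_eq_eval, nsmul_eq_mul] at hfac
  rw [risingFac, show (n : ℝ) + 1 + (ν - 1) = ν + n by ring,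
    Real.Gamma_add_nat_eq_ascPochhammer_mul hν, Real.Gamma_nat_eq_factorial, ← hfac]
  field_simp [(Real.Gamma_pos_of_pos hν).ne', (Nat.factorial_pos n).ne']

theorem risingFac_sub_add_one_nonneg {ν : ℝ} (hν : 0 < ν) {s t : ℤ} (hst : s ≤ t) :
    0 ≤ risingFac ((t - s + 1 : ℤ) : ℝ) (ν - 1) := by
  have hst : (s : ℝ) ≤ t := by exact_mod_cast hst
  exact div_nonneg (Real.Gamma_pos_of_pos (by push_cast; linarith)).le
    (Real.Gamma_pos_of_pos (by push_cast; linarith)).le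

theorem fracSum_eq_sum_multichoose {ν : ℝ} (hν : 0 < ν) (a : ℤ) (g : ℤ → ℝ) (t : ℤ) :
    fracSum ν a g t = ∑ s ∈ Icc a t, Ring.multichoose ν (t - s).toNat * g s := by
  refine sum_congr rfl fun s hs => ?_
  have hcast : ((t - s + 1 : ℤ) : ℝ) = ((t - s).toNat : ℝ) + 1 := by
    have hts : t - s + 1 = ((t - s).toNat : ℤ) + 1 := by have := (mem_Icc.1 hs).2; omega
    exact_mod_cast hts
  rw [hcast, risingFac_natCast_add_one_div_Gamma_eq_multichoose hν]

theorem sum_Icc_multichoose_mul_multichoose {R : Type*} [CommRing R] [BinomialRing R]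
    (ν η : R) {s t : ℤ} (hst : s ≤ t) :
    ∑ τ ∈ Icc s t, Ring.multichoose ν (t - τ).toNat * Ring.multichoose η (τ - s).toNat =
      Ring.multichoose (ν + η) (t - s).toNat := by
  rw [Ring.multichoose_add]
  refine sum_nbij' (fun τ => ((t - τ).toNat, (τ - s).toNat)) (fun ij => s + ij.2)
    ?_ ?_ ?_ ?_ (fun _ _ => rfl)
  · intro τ hτ
    simp only [mem_Icc] at hτ
    simp only [HasAntidiagonal.mem_antidiagonal]
    omega
  · intro ij hij
    simp only [HasAntidiagonal.mem_antidiagonal] at hij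
    simp only [mem_Icc]
    omega
  · intro τ hτ
    simp only [mem_Icc] at hτ
    omega
  · intro ij hij
    simp only [HasAntidiagonal.mem_antidiagonal] at hij
    ext <;> dsimp only <;> omega

theorem fracSum_fracSum {ν η : ℝ} (hν : 0 < ν) (hη : 0 < η) (a : ℤ) (g : ℤ → ℝ) (t : ℤ) :
    fracSum ν a (fracSum η a g) t = fracSum (ν + η) a g t := by
  simp only [fracSum_eq_sum_multichoose hν, fracSum_eq_sum_multichoose hη,
    fracSum_eq_sum_multichoose (add_pos hν hη), mul_sum]
  rw [sum_comm' (t' := Icc a t) (s' := fun s => Icc s t)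
    (fun τ s => by simp only [mem_Icc]; omega)]
  refine sum_congr rfl fun s hs => ?_
  rw [← sum_Icc_multichoose_mul_multichoose ν η (mem_Icc.1 hs).2, sum_mul]
  exact sum_congr rfl fun τ _ => by ring

theorem fracSum_one (a : ℤ) (g : ℤ → ℝ) (t : ℤ) : fracSum 1 a g t = ∑ s ∈ Icc a t, g s := by
  simp [fracSum_eq_sum_multichoose one_pos, Ring.multichoose_one]

theorem sum_Icc_nabla (h : ℤ → ℝ) {a t : ℤ} (hat : a ≤ t) :
    ∑ s ∈ Icc (a + 1) t, nabla h s = h t - h a := by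
  induction t, hat using Int.leInduction with
  | base => simp
  | succ t hat ih =>
    rw [← insert_Icc_right_eq_Icc_add_one (by omega), sum_insert (by simp), ih, nabla,
      add_sub_cancel_right]
    ring

theorem fracSum_nabla_iterate (n : ℕ) (h : ℤ → ℝ) {a : ℤ}
    (hh : ∀ k ≤ n, nabla^[k] h a = 0) {t : ℤ} (hat : a ≤ t) :
    fracSum ((n : ℝ) + 1) (a + 1) (nabla^[n + 1] h) t = h t := by
  induction n generalizing h t with
  | zero =>
    simpa [fracSum_one, sum_Icc_nabla h hat] using hh 0 le_rfl
  | succ n ih =>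
    have hh' : ∀ k ≤ n, nabla^[k] (nabla h) a = 0 := fun k hk =>
      hh (k + 1) (by omega)
    rw [show ((n + 1 : ℕ) : ℝ) + 1 = 1 + ((n : ℝ) + 1) by push_cast; ring,
      ← fracSum_fracSum one_pos (by positivity), fracSum_one, Function.iterate_succ_apply]
    rw [sum_congr rfl fun s hs => ih (nabla h) hh' (by linarith [(mem_Icc.1 hs).1]),
      sum_Icc_nabla h hat, show h a = 0 from hh 0 (Nat.zero_le _), sub_zero]

theorem fracSum_caputoNabla {μ : ℝ} (hμ : ∀ n : ℤ, μ ≠ n) {p : ℕ} (hp : (p : ℝ) < μ) {a : ℤ}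
    {f : ℤ → ℝ} (hf : ∀ k, p ≤ k → k < ⌈μ⌉₊ → nabla^[k] f a = 0) {t : ℤ} (hat : a ≤ t) :
    fracSum (μ - p) (a + 1) (caputoNabla μ (a + 1) f) t = nabla^[p] f t := by
  have hμm : μ < ⌈μ⌉₊ := (Nat.le_ceil μ).lt_of_ne fun h => hμ ⌈μ⌉₊ (by exact_mod_cast h)
  have hpm : p < ⌈μ⌉₊ := Nat.lt_ceil.2 hp
  obtain ⟨q, hq⟩ : ∃ q, ⌈μ⌉₊ = q + 1 + p := ⟨⌈μ⌉₊ - p - 1, by omega⟩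
  have hexp : μ - p + (⌈μ⌉₊ - μ) = (q : ℝ) + 1 := by
    rw [hq]
    push_cast
    ring
  rw [caputoNabla, fracSum_fracSum (sub_pos.2 hp) (sub_pos.2 hμm), hexp, hq,
    Function.iterate_add_apply]
  refine fracSum_nabla_iterate q _ (fun k hk => ?_) hat
  rw [← Function.iterate_add_apply]
  exact hf (k + p) (by omega) (by omega)

theorem abs_fracSum_le {ν γ δ : ℝ} (hν : 0 < ν) (hγδ : γ.HolderConjugate δ) (a : ℤ)
    (g : ℤ → ℝ) (t : ℤ) :
    |fracSum ν a g t| ≤ 1 / Real.Gamma ν *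
      (∑ s ∈ Icc a t, risingFac ((t - s + 1 : ℤ) : ℝ) (ν - 1) ^ γ) ^ (1 / γ) *
      (∑ s ∈ Icc a t, |g s| ^ δ) ^ (1 / δ) := by
  have hΓ := Real.Gamma_pos_of_pos hν
  have hK : ∀ s ∈ Icc a t, 0 ≤ risingFac ((t - s + 1 : ℤ) : ℝ) (ν - 1) := fun s hs =>
    risingFac_sub_add_one_nonneg hν (mem_Icc.1 hs).2
  have hsum : fracSum ν a g t =
      1 / Real.Gamma ν * ∑ s ∈ Icc a t, risingFac ((t - s + 1 : ℤ) : ℝ) (ν - 1) * g s := by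
    rw [fracSum, mul_sum]
    exact sum_congr rfl fun s _ => by ring
  calc |fracSum ν a g t|
      = 1 / Real.Gamma ν * |∑ s ∈ Icc a t, risingFac ((t - s + 1 : ℤ) : ℝ) (ν - 1) * g s| := by
        rw [hsum, abs_mul, abs_of_pos (one_div_pos.2 hΓ)]
    _ ≤ 1 / Real.Gamma ν * ∑ s ∈ Icc a t, risingFac ((t - s + 1 : ℤ) : ℝ) (ν - 1) * |g s| := by
        gcongr
        refine (abs_sum_le_sum_abs _ _).trans (le_of_eq (sum_congr rfl fun s hs => ?_))
        rw [abs_mul, abs_of_nonneg (hK s hs)]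
    _ ≤ _ := by
        rw [mul_assoc]
        gcongr
        exact Real.inner_le_Lp_mul_Lq_of_nonneg _ hγδ hK fun s _ => abs_nonneg (g s)

theorem abs_nabla_iterate_le {μ γ δ : ℝ} (hμ : ∀ n : ℤ, μ ≠ n) {p : ℕ} (hp : (p : ℝ) < μ)
    (hγδ : γ.HolderConjugate δ) {a : ℤ} {f : ℤ → ℝ}
    (hf : ∀ k, p ≤ k → k < ⌈μ⌉₊ → nabla^[k] f a = 0) {t b : ℤ} (hat : a ≤ t) (htb : t ≤ b) :
    |nabla^[p] f t| ≤ 1 / Real.Gamma (μ - p) *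
      (∑ τ ∈ Icc (a + 1) t, risingFac ((t - τ + 1 : ℤ) : ℝ) (μ - p - 1) ^ γ) ^ (1 / γ) *
      (∑ τ ∈ Icc (a + 1) b, |caputoNabla μ (a + 1) f τ| ^ δ) ^ (1 / δ) := by
  have hK : 0 ≤ ∑ τ ∈ Icc (a + 1) t, risingFac ((t - τ + 1 : ℤ) : ℝ) (μ - p - 1) ^ γ :=
    sum_nonneg fun τ hτ =>
      Real.rpow_nonneg (risingFac_sub_add_one_nonneg (sub_pos.2 hp) (mem_Icc.1 hτ).2) γ
  have hδ : 0 < δ := hγδ.symm.pos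
  rw [← fracSum_caputoNabla hμ hp hf hat]
  refine (abs_fracSum_le (sub_pos.2 hp) hγδ _ _ _).trans ?_
  gcongr

theorem sum_rpow_one_div_le_mul_of_le {ι : Type*} (s : Finset ι) {x y : ι → ℝ} {c r : ℝ}
    (hr : 0 < r) (hc : 0 ≤ c) (hx : ∀ i ∈ s, 0 ≤ x i) (hy : ∀ i ∈ s, 0 ≤ y i)
    (hxy : ∀ i ∈ s, x i ≤ c * y i) :
    (∑ i ∈ s, x i ^ r) ^ (1 / r) ≤ c * (∑ i ∈ s, y i ^ r) ^ (1 / r) := by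
  calc (∑ i ∈ s, x i ^ r) ^ (1 / r)
      ≤ (∑ i ∈ s, (c * y i) ^ r) ^ (1 / r) := by
        refine Real.rpow_le_rpow (sum_nonneg fun i hi => Real.rpow_nonneg (hx i hi) r)
          (sum_le_sum fun i hi => Real.rpow_le_rpow (hx i hi) (hxy i hi) hr.le) (by positivity)
    _ = c * (∑ i ∈ s, y i ^ r) ^ (1 / r) := by
        rw [sum_congr rfl fun i hi => Real.mul_rpow hc (hy i hi), ← mul_sum,
          Real.mul_rpow (by positivity) (sum_nonneg fun i hi => by have := hy i hi; positivity),
          ← Real.rpow_mul hc, mul_one_div_cancel hr.ne', Real.rpow_one]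

theorem discrete_nabla_fractional_sobolev_general
    (μ : ℝ) (hμint : ∀ n : ℤ, μ ≠ n)
    (m : ℕ) (hm : m = ⌈μ⌉₊)
    (p : ℕ) (hp : (p : ℝ) < μ) (a : ℕ)
    (b : ℤ)
    (f : ℤ → ℝ)
    (hf0 : ∀ k, p ≤ k → k ≤ m - 1 → nabla^[k] f a = 0)
    (γ δ : ℝ) (hγ : 1 < γ) (hγδ : 1 / γ + 1 / δ = 1)
    (r : ℝ) (hr : 1 ≤ r) :
    (∑ j ∈ Finset.Icc ((a : ℤ) + m) b, |nabla^[p] f j| ^ r) ^ (1 / r) ≤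
      (1 / Real.Gamma (μ - p)) *
        (∑ j ∈ Finset.Icc ((a : ℤ) + m) b,
          (∑ τ ∈ Finset.Icc ((a : ℤ) + 1) j,
            risingFac ((j - τ + 1 : ℤ) : ℝ) (μ - p - 1) ^ γ) ^ (r / γ)) ^ (1 / r) *
        (∑ τ ∈ Finset.Icc ((a : ℤ) + 1) b,
          |caputoNabla μ ((a : ℤ) + 1) f τ| ^ δ) ^ (1 / δ) := by
  subst hm
  have hγδ' : γ.HolderConjugate δ :=
    Real.holderConjugate_iff.2 ⟨hγ, by simpa only [one_div] using hγδ⟩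
  have hf : ∀ k, p ≤ k → k < ⌈μ⌉₊ → nabla^[k] f a = 0 := fun k hpk hk =>
    hf0 k hpk (by omega)
  set D := (∑ τ ∈ Icc ((a : ℤ) + 1) b, |caputoNabla μ ((a : ℤ) + 1) f τ| ^ δ) ^ (1 / δ)
  set S := fun j : ℤ => ∑ τ ∈ Icc ((a : ℤ) + 1) j,
    risingFac ((j - τ + 1 : ℤ) : ℝ) (μ - p - 1) ^ γ
  have hS : ∀ j, 0 ≤ S j := fun j => sum_nonneg fun τ hτ =>
    Real.rpow_nonneg (risingFac_sub_add_one_nonneg (sub_pos.2 hp) (mem_Icc.1 hτ).2) γ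
  have hpoint : ∀ j ∈ Icc ((a : ℤ) + ⌈μ⌉₊) b,
      |nabla^[p] f j| ≤ 1 / Real.Gamma (μ - p) * D * S j ^ (1 / γ) := fun j hj => by
    obtain ⟨hj₁, hj₂⟩ := mem_Icc.1 hj
    rw [mul_right_comm]
    exact abs_nabla_iterate_le hμint hp hγδ' hf (by omega) hj₂
  calc _ ≤ 1 / Real.Gamma (μ - p) * D *
        (∑ j ∈ Icc ((a : ℤ) + ⌈μ⌉₊) b, (S j ^ (1 / γ)) ^ r) ^ (1 / r) :=
        sum_rpow_one_div_le_mul_of_le _ (by linarith) (by positivity) (fun _ _ => abs_nonneg _)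
          (fun j _ => Real.rpow_nonneg (hS j) _) hpoint
    _ = _ := by
        simp only [← Real.rpow_mul (hS _), one_div_mul_eq_div]
        ring

/-- Discrete nabla fractional Sobolev inequality. -/
theorem discrete_nabla_fractional_sobolev
    (μ : ℝ) (hμ : 0 < μ) (hμint : ∀ n : ℤ, μ ≠ n)
    (m : ℕ) (hm : m = ⌈μ⌉₊)
    (p : ℕ) (hp : (p : ℝ) < μ) (a : ℕ)
    (b : ℤ) (hb : (a : ℤ) + m < b)
    (f : ℤ → ℝ)
    (hf0 : ∀ k, p ≤ k → k ≤ m - 1 → nabla^[k] f a = 0)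
    (γ δ : ℝ) (hγ : 1 < γ) (hδ : 1 < δ) (hγδ : 1 / γ + 1 / δ = 1)
    (r : ℝ) (hr : 1 ≤ r) :
    (∑ j ∈ Finset.Icc ((a : ℤ) + m) b, |nabla^[p] f j| ^ r) ^ (1 / r) ≤
      (1 / Real.Gamma (μ - p)) *
        (∑ j ∈ Finset.Icc ((a : ℤ) + m) b,
          (∑ τ ∈ Finset.Icc ((a : ℤ) + 1) j,
            risingFac ((j - τ + 1 : ℤ) : ℝ) (μ - p - 1) ^ γ) ^ (r / γ)) ^ (1 / r) *
        (∑ τ ∈ Finset.Icc ((a : ℤ) + 1) b,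
          |caputoNabla μ ((a : ℤ) + 1) f τ| ^ δ) ^ (1 / δ) :=
  discrete_nabla_fractional_sobolev_general μ hμint m hm p hp a b f hf0 γ δ hγ hγδ r hr
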